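/- arXiv:1204.4380 — 4 statements merged into one kernel-verified Lean document; each statement's English description precedes it below -/
import Mathlib

section
/- Let k : ℝ → ℝ be continuous. Solutions of the second-order linear ODE y'' - c(t) y' + k(t) y = 0 with y(a) = y(b) = 0 for some a < b and y not identically zero exist if and only if there is a nontrivial solution vanishing at two distinct points; equivalently, if every nontrivial solution vanishes at most once, then for each pair of initial conditions at distinct points a ≠ b with y(a) = 1, y(b) = 0 the solution is unique and positive on (−∞, b) when a < b. -/
open Set

/-- Uniqueness: if a solution of `y'' = c y' - k y` has `y(b) = 0` and `y'(b) = 0`,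
then it vanishes identically. -/
lemma zero_of_zero_ic (c k : ℝ → ℝ) (hc : Continuous c) (hk : Continuous k)
    (b : ℝ) (y y' : ℝ → ℝ)
    (hy : ∀ t, HasDerivAt y (y' t) t)
    (hODE : ∀ t, HasDerivAt y' (c t * y' t - k t * y t) t)
    (h0 : y b = 0) (h0' : y' b = 0) : ∀ x, y x = 0 := by
  intro x
  set l : ℝ := min b x - 1 with hl
  set r : ℝ := max b x + 1 with hr
  have hlr : l < r := by
    have h1 : min b x ≤ max b x := (min_le_left b x).trans (le_max_left b x)
    simp only [hl, hr]; linarith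
  have hbmem : b ∈ Ioo l r := by
    constructor
    · have := min_le_left b x; simp only [hl]; linarith
    · have := le_max_left b x; simp only [hr]; linarith
  have hxmem : x ∈ Icc l r := by
    constructor
    · have := min_le_right b x; simp only [hl]; linarith
    · have := le_max_right b x; simp only [hr]; linarith
  -- clamp time to `[l, r]`
  set proj : ℝ → ℝ := fun t => max l (min t r) with hproj
  have hprojmem : ∀ t, proj t ∈ Icc l r := fun t =>
    ⟨le_max_left _ _, max_le hlr.le (min_le_right _ _)⟩
  have hprojeq : ∀ t ∈ Icc l r, proj t = t := by
    intro t ht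
    simp only [hproj]
    rw [min_eq_left ht.2, max_eq_right ht.1]
  obtain ⟨C, hC⟩ : ∃ C, ∀ t ∈ Icc l r, ‖c t‖ ≤ C :=
    isCompact_Icc.exists_bound_of_continuousOn hc.continuousOn
  obtain ⟨K, hK⟩ : ∃ K, ∀ t ∈ Icc l r, ‖k t‖ ≤ K :=
    isCompact_Icc.exists_bound_of_continuousOn hk.continuousOn
  have hC0 : 0 ≤ C := le_trans (norm_nonneg _) (hC l ⟨le_rfl, hlr.le⟩)
  have hK0 : 0 ≤ K := le_trans (norm_nonneg _) (hK l ⟨le_rfl, hlr.le⟩)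
  set v : ℝ → ℝ × ℝ → ℝ × ℝ :=
    fun t p => (p.2, c (proj t) * p.2 - k (proj t) * p.1) with hv
  set L : NNReal := Real.toNNReal (1 + C + K) with hL
  have hlip : ∀ t, LipschitzWith L (v t) := by
    intro t
    apply LipschitzWith.of_dist_le_mul
    intro p q
    have hcb : |c (proj t)| ≤ C := hC _ (hprojmem t)
    have hkb : |k (proj t)| ≤ K := hK _ (hprojmem t)
    have hd1 : dist p.1 q.1 ≤ dist p q := by rw [Prod.dist_eq]; exact le_max_left _ _
    have hd2 : dist p.2 q.2 ≤ dist p q := by rw [Prod.dist_eq]; exact le_max_right _ _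
    have hdnn : (0:ℝ) ≤ dist p q := dist_nonneg
    rw [Prod.dist_eq]
    have hLc : (L : ℝ) = 1 + C + K := by
      rw [hL, Real.coe_toNNReal]; linarith
    rw [hLc]
    apply max_le
    · calc dist p.2 q.2 ≤ dist p q := hd2
        _ ≤ (1 + C + K) * dist p q := by nlinarith
    · rw [Real.dist_eq]
      have : c (proj t) * p.2 - k (proj t) * p.1 - (c (proj t) * q.2 - k (proj t) * q.1)
          = c (proj t) * (p.2 - q.2) - k (proj t) * (p.1 - q.1) := by ring
      rw [this]
      calc |c (proj t) * (p.2 - q.2) - k (proj t) * (p.1 - q.1)|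
          ≤ |c (proj t) * (p.2 - q.2)| + |k (proj t) * (p.1 - q.1)| := abs_sub _ _
        _ = |c (proj t)| * |p.2 - q.2| + |k (proj t)| * |p.1 - q.1| := by
            rw [abs_mul, abs_mul]
        _ ≤ C * dist p q + K * dist p q := by
            have e2 : |p.2 - q.2| = dist p.2 q.2 := (Real.dist_eq _ _).symm
            have e1 : |p.1 - q.1| = dist p.1 q.1 := (Real.dist_eq _ _).symm
            rw [e1, e2]
            have := abs_nonneg (p.2 - q.2)
            gcongr <;> first | exact hcb | exact hkb
        _ ≤ (1 + C + K) * dist p q := by nlinarith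
  set f : ℝ → ℝ × ℝ := fun t => (y t, y' t) with hf
  set g : ℝ → ℝ × ℝ := fun _ => ((0:ℝ), (0:ℝ)) with hg
  have hfd : ∀ t ∈ Ioo l r, HasDerivAt f (v t (f t)) t := by
    intro t ht
    have : v t (f t) = (y' t, c t * y' t - k t * y t) := by
      simp only [hv, hf, hprojeq t (Ioo_subset_Icc_self ht)]
    rw [this]
    exact (hy t).prodMk (hODE t)
  have hgd : ∀ t ∈ Ioo l r, HasDerivAt g (v t (g t)) t := by
    intro t ht
    have : v t (g t) = ((0:ℝ), (0:ℝ)) := by simp [hv, hg]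
    rw [this]
    exact hasDerivAt_const t _
  have heq : EqOn f g (Icc l r) := by
    apply ODE_solution_unique_of_mem_Icc
      (fun t _ => (hlip t).lipschitzOnWith (s := univ)) hbmem
      (fun t ht => ((hy t).prodMk (hODE t)).continuousAt.continuousWithinAt)
      hfd (fun _ _ => mem_univ _)
      continuousOn_const hgd (fun _ _ => mem_univ _)
    simp [hf, hg, h0, h0']
  have := heq hxmem
  exact (by simpa [hf, hg, Prod.ext_iff] using this : y x = 0 ∧ y' x = 0).1

/-- Under the no-conjugate-points hypothesis (every nontrivial solution of
`y'' - c y' + k y = 0` vanishes at most once), the solution with `y(a) = 1`, `y(b) = 0`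
(`a < b`) is positive for `t < b` and negative for `t > b`. -/
theorem stmt6 (c k : ℝ → ℝ) (hc : Continuous c) (hk : Continuous k)
    (hnoconj : ∀ u u' : ℝ → ℝ, (∀ t, HasDerivAt u (u' t) t) →
      (∀ t, HasDerivAt u' (c t * u' t - k t * u t) t) →
      ∀ s t : ℝ, s ≠ t → u s = 0 → u t = 0 → ∀ x, u x = 0)
    (a b : ℝ) (hab : a < b)
    (y y' : ℝ → ℝ)
    (hy : ∀ t, HasDerivAt y (y' t) t)
    (hODE : ∀ t, HasDerivAt y' (c t * y' t - k t * y t) t)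
    (hya : y a = 1) (hyb : y b = 0) :
    (∀ t < b, 0 < y t) ∧ (∀ t > b, y t < 0) := by
  have hycont : Continuous y := by
    have : Differentiable ℝ y := fun t => (hy t).differentiableAt
    exact this.continuous
  -- y vanishes only at b
  have hne : ∀ s, s ≠ b → y s ≠ 0 := by
    intro s hs h0
    have := hnoconj y y' hy hODE s b hs h0 hyb a
    rw [hya] at this; norm_num at this
  -- positivity on (-∞, b)
  have hpos : ∀ t < b, 0 < y t := by
    intro t ht
    by_contra h
    push_neg at h
    have hne' : y t ≠ 0 := hne t (ne_of_lt ht)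
    have hneg : y t < 0 := lt_of_le_of_ne h hne'
    -- IVT between t and a gives a zero below b
    have h0mem : (0:ℝ) ∈ uIcc (y t) (y a) := by
      rw [hya, Set.mem_uIcc]; left; constructor <;> linarith
    obtain ⟨s, hs, hs0⟩ := intermediate_value_uIcc (a := t) (b := a)
      hycont.continuousOn h0mem
    have hsb : s < b := by
      rcases le_total t a with hta | hat
      · rw [uIcc_of_le hta] at hs; exact lt_of_le_of_lt hs.2 hab
      · rw [uIcc_of_ge hat] at hs; exact lt_of_le_of_lt hs.2 ht
    exact hne s (ne_of_lt hsb) hs0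
  refine ⟨hpos, ?_⟩
  intro t ht
  by_contra h
  push_neg at h
  have hne' : y t ≠ 0 := hne t (ne_of_gt ht)
  have htpos : 0 < y t := lt_of_le_of_ne h (Ne.symm hne')
  -- then y > 0 on (b, ∞) as well, so y ≥ 0 everywhere, local min at b
  have hposr : ∀ s > b, 0 < y s := by
    intro s hs
    by_contra h2
    push_neg at h2
    have hsneg : y s < 0 := lt_of_le_of_ne h2 (hne s (ne_of_gt hs))
    have h0mem : (0:ℝ) ∈ uIcc (y s) (y t) :=
      by rw [Set.mem_uIcc]; left; constructor <;> linarith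
    obtain ⟨u, hu, hu0⟩ := intermediate_value_uIcc (a := s) (b := t)
      hycont.continuousOn h0mem
    have hub : b < u := by
      rcases le_total s t with hst | hts
      · rw [uIcc_of_le hst] at hu; exact lt_of_lt_of_le hs hu.1
      · rw [uIcc_of_ge hts] at hu; exact lt_of_lt_of_le ht hu.1
    exact hne u (ne_of_gt hub) hu0
  have hmin : IsLocalMin y b := by
    apply Filter.Eventually.of_forall
    intro s
    rcases lt_trichotomy s b with h1 | h1 | h1
    · rw [hyb]; exact (hpos s h1).le
    · rw [h1]
    · rw [hyb]; exact (hposr s h1).le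
  have hy'b : y' b = 0 := hmin.hasDerivAt_eq_zero (hy b)
  have := zero_of_zero_ic c k hc hk b y y' hy hODE hyb hy'b a
  rw [hya] at this; norm_num at this
end

section
/- Under the no-conjugate-points hypothesis, for fixed a and t ≤ a, the function b ↦ y(t; a, b) is monotone: if a < b' < b then y(t; a, b') ≥ y(t; a, b) for t ≤ a, and y(t; a, b') ≤ y(t; a, b) for t ≥ a. -/
/-- Monotonicity in `b`: under the no-conjugate-points hypothesis, if `a < b' < b` then
`y(t; a, b') ≥ y(t; a, b)` for `t ≤ a` and `y(t; a, b') ≤ y(t; a, b)` for `t ≥ a`. -/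
theorem stmt8 (c k : ℝ → ℝ) (hc : Continuous c) (hk : Continuous k)
    (hnoconj : ∀ u u' : ℝ → ℝ, (∀ t, HasDerivAt u (u' t) t) →
      (∀ t, HasDerivAt u' (c t * u' t - k t * u t) t) →
      ∀ s t : ℝ, s ≠ t → u s = 0 → u t = 0 → ∀ x, u x = 0)
    (a b b' : ℝ) (hab' : a < b') (hb'b : b' < b)
    (y₁ y₁' y₂ y₂' : ℝ → ℝ)
    -- y₁ = y(·; a, b)
    (hy₁ : ∀ t, HasDerivAt y₁ (y₁' t) t)
    (hy₁ODE : ∀ t, HasDerivAt y₁' (c t * y₁' t - k t * y₁ t) t)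
    (hy₁a : y₁ a = 1) (hy₁b : y₁ b = 0)
    -- y₂ = y(·; a, b')
    (hy₂ : ∀ t, HasDerivAt y₂ (y₂' t) t)
    (hy₂ODE : ∀ t, HasDerivAt y₂' (c t * y₂' t - k t * y₂ t) t)
    (hy₂a : y₂ a = 1) (hy₂b' : y₂ b' = 0) :
    (∀ t ≤ a, y₁ t ≤ y₂ t) ∧ (∀ t ≥ a, y₂ t ≤ y₁ t) := by
  have hy₁cont : Continuous y₁ := by
    rw [continuous_iff_continuousAt]; exact fun t => (hy₁ t).continuousAt
  have hy₂cont : Continuous y₂ := by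
    rw [continuous_iff_continuousAt]; exact fun t => (hy₂ t).continuousAt
  -- y₁ b' > 0
  have hy₁b' : 0 < y₁ b' := by
    by_contra h
    push_neg at h
    have h0 : (0 : ℝ) ∈ Set.Icc (y₁ b') (y₁ a) := ⟨h, by rw [hy₁a]; norm_num⟩
    obtain ⟨s, hs, hs0⟩ := intermediate_value_Icc' hab'.le hy₁cont.continuousOn h0
    have := hnoconj y₁ y₁' hy₁ hy₁ODE s b (by linarith [hs.2] : s ≠ b) hs0 hy₁b a
    rw [hy₁a] at this; norm_num at this
  -- u = y₁ - y₂
  set u : ℝ → ℝ := fun t => y₁ t - y₂ t with hu_def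
  have hucont : Continuous u := hy₁cont.sub hy₂cont
  have hu : ∀ t, HasDerivAt u (y₁' t - y₂' t) t := fun t => (hy₁ t).sub (hy₂ t)
  have huODE : ∀ t, HasDerivAt (fun t => y₁' t - y₂' t)
      (c t * (y₁' t - y₂' t) - k t * u t) t := by
    intro t
    have := (hy₁ODE t).sub (hy₂ODE t)
    refine this.congr_deriv ?_
    simp only [hu_def]; ring
  have hua : u a = 0 := by simp [hu_def, hy₁a, hy₂a]
  have hub' : 0 < u b' := by simp [hu_def, hy₂b', hy₁b']
  constructor
  · -- t ≤ a : y₁ t ≤ y₂ t, i.e. u t ≤ 0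
    intro t ht
    rcases eq_or_lt_of_le ht with rfl | hta
    · rw [hy₁a, hy₂a]
    by_contra h
    push_neg at h
    have hut : 0 < u t := by simp [hu_def]; linarith
    -- perturbation v = u - ε y₂
    set ε : ℝ := u t / (|y₂ t| + 1) with hε_def
    have hεpos : 0 < ε := div_pos hut (by positivity)
    set v : ℝ → ℝ := fun x => u x - ε * y₂ x with hv_def
    have hvcont : Continuous v := hucont.sub (continuous_const.mul hy₂cont)
    have hv : ∀ x, HasDerivAt v (y₁' x - y₂' x - ε * y₂' x) x :=
      fun x => (hu x).sub ((hy₂ x).const_mul ε)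
    have hvODE : ∀ x, HasDerivAt (fun x => y₁' x - y₂' x - ε * y₂' x)
        (c x * (y₁' x - y₂' x - ε * y₂' x) - k x * v x) x := by
      intro x
      have := (huODE x).sub ((hy₂ODE x).const_mul ε)
      refine this.congr_deriv ?_
      simp only [hv_def, hu_def]; ring
    have hva : v a = -ε := by simp [hv_def, hua, hy₂a]
    have hvb' : 0 < v b' := by simp [hv_def, hy₂b', hub']
    have hvt : 0 < v t := by
      have h1 : ε * y₂ t ≤ ε * |y₂ t| := by
        apply mul_le_mul_of_nonneg_left (le_abs_self _) hεpos.le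
      have h2 : ε * (|y₂ t| + 1) = u t := by
        rw [hε_def]; field_simp
      have h3 : v t = u t - ε * y₂ t := rfl
      linarith
    -- zero in (t, a)
    have h01 : (0 : ℝ) ∈ Set.Icc (v a) (v t) := ⟨by rw [hva]; linarith, hvt.le⟩
    obtain ⟨s₁, hs₁, hs₁0⟩ := intermediate_value_Icc' hta.le hvcont.continuousOn h01
    -- zero in (a, b')
    have h02 : (0 : ℝ) ∈ Set.Icc (v a) (v b') := ⟨by rw [hva]; linarith, hvb'.le⟩
    obtain ⟨s₂, hs₂, hs₂0⟩ := intermediate_value_Icc hab'.le hvcont.continuousOn h02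
    have hs₂a : a < s₂ := by
      rcases eq_or_lt_of_le hs₂.1 with rfl | h'
      · rw [hva] at hs₂0; linarith
      · exact h'
    have hne : s₁ ≠ s₂ := by
      intro hEq; rw [hEq] at hs₁; linarith [hs₁.2]
    have := hnoconj v _ hv hvODE s₁ s₂ hne hs₁0 hs₂0 a
    rw [hva] at this; linarith
  · -- t ≥ a : y₂ t ≤ y₁ t, i.e. 0 ≤ u t
    intro t ht
    rcases eq_or_lt_of_le ht with rfl | hta
    · rw [hy₁a, hy₂a]
    by_contra h
    push_neg at h
    have hut : u t < 0 := by simp [hu_def]; linarith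
    -- zero between t and b'
    have htb' : t ≠ b' := by intro hEq; rw [hEq] at hut; linarith
    obtain ⟨s, hs, hs0⟩ : ∃ s ∈ Set.uIcc t b', u s = 0 := by
      have : (0 : ℝ) ∈ Set.uIcc (u t) (u b') := by
        rw [Set.mem_uIcc]; left; exact ⟨hut.le, hub'.le⟩
      obtain ⟨s, hs, hs0⟩ := intermediate_value_uIcc hucont.continuousOn this
      exact ⟨s, hs, hs0⟩
    have hsa : a < s := by
      rcases Set.mem_uIcc.mp hs with ⟨h1, _⟩ | ⟨h1, _⟩
      · linarith
      · linarith
    have := hnoconj u _ hu huODE s a (by linarith : s ≠ a) hs0 hua b'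
    linarith
end

section
/- Under the no-conjugate-points hypothesis and the uniform bounds |k| ≤ A², |c| ≤ A, for each fixed a and t the limit y(t; a) := lim_{b→+∞} y(t; a, b) exists, is nonnegative, satisfies y(a; a) = 1, and solves y'' − c y' + k y = 0. -/
open Filter

/-- Under the no-conjugate-points hypothesis and uniform bounds `|k| ≤ A²`, `|c| ≤ A`,
for fixed `a` the limit `y(t; a) = lim_{b→+∞} y(t; a, b)` exists for every `t`, is
nonnegative, equals `1` at `t = a`, and solves `y'' - c y' + k y = 0`. -/
theorem stmt9 (A : ℝ) (hA : 0 ≤ A)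
    (c k : ℝ → ℝ) (hc : Continuous c) (hk : Continuous k)
    (hcA : ∀ t, |c t| ≤ A) (hkA : ∀ t, |k t| ≤ A ^ 2)
    (hnoconj : ∀ u u' : ℝ → ℝ, (∀ t, HasDerivAt u (u' t) t) →
      (∀ t, HasDerivAt u' (c t * u' t - k t * u t) t) →
      ∀ s t : ℝ, s ≠ t → u s = 0 → u t = 0 → ∀ x, u x = 0)
    (a : ℝ) (Y Y' : ℝ → ℝ → ℝ)
    -- for each `b > a`, `Y b = y(·; a, b)` is the solution with `Y b a = 1`, `Y b b = 0`
    (hY : ∀ b > a, ∀ t, HasDerivAt (Y b) (Y' b t) t)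
    (hYODE : ∀ b > a, ∀ t, HasDerivAt (Y' b) (c t * Y' b t - k t * Y b t) t)
    (hYa : ∀ b > a, Y b a = 1) (hYb : ∀ b > a, Y b b = 0) :
    ∃ yl yl' : ℝ → ℝ,
      (∀ t, Tendsto (fun b => Y b t) atTop (nhds (yl t))) ∧
      yl a = 1 ∧ (∀ t, 0 ≤ yl t) ∧
      (∀ t, HasDerivAt yl (yl' t) t) ∧
      (∀ t, HasDerivAt yl' (c t * yl' t - k t * yl t) t) := by
  have hb0 : a < a + 1 := by linarith
  have hb1 : a < a + 2 := by linarith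
  -- positivity of `Y b` to the left of `b`
  have hpos : ∀ b, a < b → ∀ t, t < b → 0 < Y b t := by
    intro b hb t ht
    have hne : ∀ x, x ≠ b → Y b x ≠ 0 := by
      intro x hx h0
      have hall := hnoconj (Y b) (Y' b) (hY b hb) (hYODE b hb) x b hx h0 (hYb b hb) a
      rw [hYa b hb] at hall
      exact one_ne_zero hall
    by_contra hle
    push_neg at hle
    have hlt : Y b t < 0 := lt_of_le_of_ne hle (hne t (ne_of_lt ht))
    have hcont : Continuous (Y b) :=
      continuous_iff_continuousAt.2 fun x => (hY b hb x).continuousAt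
    have h0mem : (0:ℝ) ∈ Set.uIcc (Y b t) (Y b a) := by
      rw [hYa b hb]
      exact Set.mem_uIcc.2 (Or.inl ⟨le_of_lt hlt, zero_le_one⟩)
    obtain ⟨z, hz, hz0⟩ := intermediate_value_uIcc hcont.continuousOn h0mem
    have hzb : z ≠ b := by
      have : z ≤ max t a := hz.2
      exact ne_of_lt (lt_of_le_of_lt this (max_lt ht hb))
    exact hne z hzb hz0
  -- basis solutions
  set u0 : ℝ → ℝ := Y (a + 1) with hu0def
  set u0' : ℝ → ℝ := Y' (a + 1) with hu0'def
  set e : ℝ → ℝ := fun t => Y (a + 2) t - Y (a + 1) t with hedef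
  set e' : ℝ → ℝ := fun t => Y' (a + 2) t - Y' (a + 1) t with he'def
  have he : ∀ t, HasDerivAt e (e' t) t := fun t => (hY _ hb1 t).sub (hY _ hb0 t)
  have he' : ∀ t, HasDerivAt e' (c t * e' t - k t * e t) t := by
    intro t
    have := (hYODE _ hb1 t).sub (hYODE _ hb0 t)
    refine this.congr_deriv ?_
    simp only [hedef, he'def]
    ring
  have hea : e a = 0 := by simp [hedef, hYa _ hb0, hYa _ hb1]
  have heb0 : 0 < e (a + 1) := by
    have h1 : Y (a + 2) (a + 1) > 0 := hpos _ hb1 _ (by linarith)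
    have h2 : Y (a + 1) (a + 1) = 0 := hYb _ hb0
    simp only [hedef]
    linarith
  have hez : ∀ x, x ≠ a → e x ≠ 0 := by
    intro x hx h0
    have hall := hnoconj e e' he he' x a hx h0 hea (a + 1)
    exact (ne_of_gt heb0) hall
  -- e is positive on (a, ∞)
  have hepos : ∀ t, a < t → 0 < e t := by
    intro t ht
    by_contra hle
    push_neg at hle
    have hlt : e t < 0 := lt_of_le_of_ne hle (hez t (ne_of_gt ht))
    have hcont : Continuous e :=
      continuous_iff_continuousAt.2 fun x => (he x).continuousAt
    have h0mem : (0:ℝ) ∈ Set.uIcc (e t) (e (a + 1)) :=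
      Set.mem_uIcc.2 (Or.inl ⟨le_of_lt hlt, le_of_lt heb0⟩)
    obtain ⟨z, hz, hz0⟩ := intermediate_value_uIcc hcont.continuousOn h0mem
    have hza : z ≠ a := by
      have : min t (a + 1) ≤ z := hz.1
      have : a < z := lt_of_lt_of_le (lt_min ht hb0) this
      exact ne_of_gt this
    exact hez z hza hz0
  -- e is negative somewhere (necessarily left of a)
  have heneg : ∃ s, e s < 0 := by
    by_contra hnn
    push_neg at hnn
    -- then a is a global min of e, so e' a = 0, and ODE uniqueness forces e ≡ 0
    have hmin : IsLocalMin e a := Filter.Eventually.of_forall fun x => by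
      rw [hea]; exact hnn x
    have he'a : e' a = 0 := hmin.hasDerivAt_eq_zero (he a)
    -- uniqueness of the first-order system
    set K : NNReal := ⟨1 + A + A ^ 2, by positivity⟩ with hKdef
    set v : ℝ → ℝ × ℝ → ℝ × ℝ := fun t p => (p.2, c t * p.2 - k t * p.1) with hvdef
    have hlip : ∀ t, LipschitzWith K (v t) := by
      intro t
      apply LipschitzWith.of_dist_le_mul
      intro p q
      rw [Prod.dist_eq, Prod.dist_eq]
      simp only [hvdef, Real.dist_eq]
      have hK : (K : ℝ) = 1 + A + A ^ 2 := rfl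
      rw [hK]
      have h1 : |p.2 - q.2| ≤ max |p.1 - q.1| |p.2 - q.2| := le_max_right _ _
      have h2 : |c t * p.2 - k t * p.1 - (c t * q.2 - k t * q.1)| ≤
          A * |p.2 - q.2| + A ^ 2 * |p.1 - q.1| := by
        have : c t * p.2 - k t * p.1 - (c t * q.2 - k t * q.1)
            = c t * (p.2 - q.2) - k t * (p.1 - q.1) := by ring
        rw [this]
        calc |c t * (p.2 - q.2) - k t * (p.1 - q.1)|
            ≤ |c t * (p.2 - q.2)| + |k t * (p.1 - q.1)| := abs_sub _ _
          _ = |c t| * |p.2 - q.2| + |k t| * |p.1 - q.1| := by rw [abs_mul, abs_mul]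
          _ ≤ A * |p.2 - q.2| + A ^ 2 * |p.1 - q.1| := by
              gcongr
              exacts [hcA t, hkA t]
      have hm1 : |p.1 - q.1| ≤ max |p.1 - q.1| |p.2 - q.2| := le_max_left _ _
      have hm2 : |p.2 - q.2| ≤ max |p.1 - q.1| |p.2 - q.2| := le_max_right _ _
      have h0 : 0 ≤ max |p.1 - q.1| |p.2 - q.2| := le_trans (abs_nonneg _) hm1
      apply max_le
      · nlinarith
      · nlinarith
    have heq := ODE_solution_unique (E := ℝ × ℝ) (v := v) (f := fun t => (e t, e' t))
        (g := fun _ => ((0:ℝ), (0:ℝ))) (a := a) (b := a + 1) hlip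
        (continuousOn_of_forall_continuousAt fun x _ =>
          ((he x).prodMk (he' x)).continuousAt)
        (fun t _ => (((he t).prodMk (he' t)).hasDerivWithinAt))
        (continuousOn_const)
        (fun t _ => by
          simpa [hvdef, Prod.mk_zero_zero] using (hasDerivAt_const t ((0:ℝ),(0:ℝ))).hasDerivWithinAt)
        (by show (e a, e' a) = _; rw [hea, he'a])
    have := heq (Set.right_mem_Icc.2 (le_of_lt hb0))
    have : e (a + 1) = 0 := congrArg Prod.fst this
    exact (ne_of_gt heb0) this
  obtain ⟨s, hs⟩ := heneg
  have hsa : s < a := by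
    rcases lt_trichotomy s a with h | h | h
    · exact h
    · rw [h, hea] at hs; exact absurd hs (lt_irrefl 0)
    · exact absurd (hepos s h) (by linarith)
  -- spanning: Y b = u0 + W b • e
  set W : ℝ → ℝ := fun b => Y b (a + 1) / e (a + 1) with hWdef
  have hspan : ∀ b, a < b → ∀ t, Y b t = u0 t + W b * e t := by
    intro b hb t
    set h : ℝ → ℝ := fun t => e (a + 1) * (Y b t - u0 t) - Y b (a + 1) * e t with hhdef
    set h' : ℝ → ℝ := fun t => e (a + 1) * (Y' b t - u0' t) - Y b (a + 1) * e' t with hh'def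
    have hd : ∀ x, HasDerivAt h (h' x) x := fun x =>
      (((hY b hb x).sub (hY _ hb0 x)).const_mul _).sub ((he x).const_mul _)
    have hd' : ∀ x, HasDerivAt h' (c x * h' x - k x * h x) x := by
      intro x
      have := ((((hYODE b hb x).sub (hYODE _ hb0 x)).const_mul (e (a+1))).sub
        ((he' x).const_mul (Y b (a+1))))
      refine this.congr_deriv ?_
      simp only [hhdef, hh'def, hedef, he'def, hu0def, hu0'def]
      ring
    have hha : h a = 0 := by
      simp only [hhdef, hYa b hb, hu0def, hYa _ hb0, hea]
      ring
    have hhb0 : h (a + 1) = 0 := by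
      simp only [hhdef, hu0def, hYb _ hb0]
      ring
    have hall := hnoconj h h' hd hd' a (a + 1) (by linarith) hha hhb0 t
    simp only [hhdef] at hall
    have hne : e (a + 1) ≠ 0 := ne_of_gt heb0
    simp only [hWdef]
    field_simp
    linarith [hall]
  -- monotonicity of W on (a, ∞)
  have hWmono : ∀ b₁ b₂, a < b₁ → b₁ < b₂ → W b₁ < W b₂ := by
    intro b₁ b₂ h1 h2
    have hs1 := hspan b₁ h1 b₁
    have hs2 := hspan b₂ (lt_trans h1 h2) b₁
    rw [hYb _ h1] at hs1
    have hp : 0 < Y b₂ b₁ := hpos _ (lt_trans h1 h2) _ h2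
    have hpe : 0 < e b₁ := hepos _ h1
    nlinarith
  -- boundedness of W
  have hWbdd : ∀ b, a < b → W b ≤ u0 s / (-e s) := by
    intro b hb
    have hsp := hspan b hb s
    have hp : 0 < Y b s := hpos _ hb _ (lt_trans hsa hb)
    rw [le_div_iff₀ (by linarith)]
    nlinarith
  -- the limit of W
  have hSne : (W '' Set.Ioi a).Nonempty := ⟨W (a + 1), ⟨a + 1, hb0, rfl⟩⟩
  have hSbdd : BddAbove (W '' Set.Ioi a) := by
    refine ⟨u0 s / (-e s), ?_⟩
    rintro x ⟨b, hb, rfl⟩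
    exact hWbdd b hb
  set lam : ℝ := sSup (W '' Set.Ioi a) with hlamdef
  have hWlam : Tendsto W atTop (nhds lam) := by
    rw [Metric.tendsto_atTop]
    intro ε hε
    obtain ⟨x, ⟨b₁, hb₁, rfl⟩, hx⟩ := exists_lt_of_lt_csSup hSne (by linarith : lam - ε < lam)
    refine ⟨b₁ + 1, fun b hb => ?_⟩
    have hbb1 : b₁ < b := by linarith
    have hba : a < b := lt_trans hb₁ hbb1
    have hle : W b ≤ lam := le_csSup hSbdd ⟨b, hba, rfl⟩
    have hgt : lam - ε < W b := lt_trans hx (hWmono b₁ b hb₁ hbb1)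
    rw [Real.dist_eq, abs_lt]
    constructor <;> linarith
  refine ⟨fun t => u0 t + lam * e t, fun t => u0' t + lam * e' t, ?_, ?_, ?_, ?_, ?_⟩
  · intro t
    have hlim : Tendsto (fun b => u0 t + W b * e t) atTop (nhds (u0 t + lam * e t)) :=
      Tendsto.const_add _ (hWlam.mul_const _)
    refine hlim.congr' ?_
    filter_upwards [eventually_gt_atTop a] with b hb
    exact (hspan b hb t).symm
  · show u0 a + lam * e a = 1
    rw [hea, hu0def, hYa _ hb0]; ring
  · intro t
    have hlim : Tendsto (fun b => Y b t) atTop (nhds (u0 t + lam * e t)) := by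
      have hlim' : Tendsto (fun b => u0 t + W b * e t) atTop (nhds (u0 t + lam * e t)) :=
        Tendsto.const_add _ (hWlam.mul_const _)
      refine hlim'.congr' ?_
      filter_upwards [eventually_gt_atTop a] with b hb
      exact (hspan b hb t).symm
    refine ge_of_tendsto hlim ?_
    filter_upwards [eventually_gt_atTop a, eventually_gt_atTop t] with b hb hbt
    exact le_of_lt (hpos b hb t hbt)
  · intro t
    exact (hY _ hb0 t).add ((he t).const_mul lam)
  · intro t
    have := (hYODE _ hb0 t).add ((he' t).const_mul lam)
    refine this.congr_deriv ?_
    simp only [hu0def, hu0'def, hedef, he'def]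
    ring
end

section
/- Let k : ℝ → ℝ be continuous with |k| ≤ A² and c continuous with |c| ≤ A for a constant A ≥ 0, and suppose every nontrivial solution of y'' − c y' + k y = 0 vanishes at most once. Then the limit solution y(t; a) = lim_{b→∞} y(t; a, b) is strictly positive for all t, and r(t) = y'(t;a)/y(t;a) is a globally defined solution of the Riccati equation r' + r² + k − c r = 0 independent of a. -/
open Filter

/-- Under disconjugacy and the bounds `|k| ≤ A²`, `|c| ≤ A`, the limit solution
`y(t; a) = lim_{b→∞} y(t; a, b)` is strictly positive for all `t`, and
`r = y'(·; a)/y(·; a)` is a globally defined solution of the Riccati equation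
`r' + r² + k - c r = 0` which does not depend on `a`. -/
theorem stmt19 (A : ℝ) (hA : 0 ≤ A)
    (c k : ℝ → ℝ) (hc : Continuous c) (hk : Continuous k)
    (hcA : ∀ t, |c t| ≤ A) (hkA : ∀ t, |k t| ≤ A ^ 2)
    -- no conjugate points: every nontrivial solution vanishes at most once
    (hnoconj : ∀ u u' : ℝ → ℝ, (∀ t, HasDerivAt u (u' t) t) →
      (∀ t, HasDerivAt u' (c t * u' t - k t * u t) t) →
      ∀ s t : ℝ, s ≠ t → u s = 0 → u t = 0 → ∀ x, u x = 0)
    (Y Y' : ℝ → ℝ → ℝ → ℝ)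
    -- for `a < b`, `Y a b = y(·; a, b)` is the solution with value `1` at `a`, `0` at `b`
    (hY : ∀ a b, a < b → ∀ t, HasDerivAt (Y a b) (Y' a b t) t)
    (hYODE : ∀ a b, a < b → ∀ t, HasDerivAt (Y' a b) (c t * Y' a b t - k t * Y a b t) t)
    (hYa : ∀ a b, a < b → Y a b a = 1) (hYb : ∀ a b, a < b → Y a b b = 0)
    (yl yl' : ℝ → ℝ → ℝ)
    -- `yl a = y(·; a)` is the pointwise limit of `Y a b` as `b → +∞`, a nonnegative
    -- solution with `yl a a = 1`
    (hlim : ∀ a t, Tendsto (fun b => Y a b t) atTop (nhds (yl a t)))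
    (hyl : ∀ a t, HasDerivAt (yl a) (yl' a t) t)
    (hylODE : ∀ a t, HasDerivAt (yl' a) (c t * yl' a t - k t * yl a t) t)
    (hyla : ∀ a, yl a a = 1) (hylnn : ∀ a t, 0 ≤ yl a t) :
    (∀ a t, 0 < yl a t) ∧
    (∀ a t, HasDerivAt (fun s => yl' a s / yl a s)
        (-(yl' a t / yl a t) ^ 2 - k t + c t * (yl' a t / yl a t)) t) ∧
    (∀ a a' t, yl' a t / yl a t = yl' a' t / yl a' t) := by
  -- Uniqueness of solutions with double zero, via an energy/Gronwall argument
  have uniq : ∀ (u u' : ℝ → ℝ), (∀ t, HasDerivAt u (u' t) t) →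
      (∀ t, HasDerivAt u' (c t * u' t - k t * u t) t) →
      ∀ t₀, u t₀ = 0 → u' t₀ = 0 → ∀ t, u t = 0 := by
    intro u u' hu hu' t₀ h0 h0' t
    set L : ℝ := 1 + 2 * A + A ^ 2 with hLdef
    set E : ℝ → ℝ := fun s => u s ^ 2 + u' s ^ 2 with hEdef
    have hEd : ∀ s, HasDerivAt E
        (2 * u s * u' s + 2 * u' s * (c s * u' s - k s * u s)) s := by
      intro s
      have h1 : HasDerivAt (fun x => u x ^ 2 + u' x ^ 2) _ s := ((hu s).pow 2).add ((hu' s).pow 2)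
      convert h1 using 1
      ring
    have hEnn : ∀ s, 0 ≤ E s := fun s => by positivity
    have hbound : ∀ s,
        |2 * u s * u' s + 2 * u' s * (c s * u' s - k s * u s)| ≤ L * E s := by
      intro s
      show |2 * u s * u' s + 2 * u' s * (c s * u' s - k s * u s)| ≤
        (1 + 2 * A + A ^ 2) * (u s ^ 2 + u' s ^ 2)
      have hc1 := (abs_le.1 (hcA s)).1
      have hc2 := (abs_le.1 (hcA s)).2
      have hk1 := (abs_le.1 (hkA s)).1
      have hk2 := (abs_le.1 (hkA s)).2
      have habs : |2 * u s * u' s| ≤ u s ^ 2 + u' s ^ 2 := by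
        rw [abs_le]
        constructor
        · nlinarith [sq_nonneg (u s + u' s)]
        · nlinarith [sq_nonneg (u s - u' s)]
      have hkterm : |k s * (2 * u s * u' s)| ≤ A ^ 2 * (u s ^ 2 + u' s ^ 2) := by
        rw [abs_mul]
        exact mul_le_mul (hkA s) habs (abs_nonneg _) (by positivity)
      have hcterm : |c s * (2 * u' s ^ 2)| ≤ A * (2 * u' s ^ 2) := by
        rw [abs_mul, abs_of_nonneg (by positivity : (0:ℝ) ≤ 2 * u' s ^ 2)]
        exact mul_le_mul_of_nonneg_right (hcA s) (by positivity)
      have hk3 := abs_le.1 hkterm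
      have hc3 := abs_le.1 hcterm
      have hab3 := abs_le.1 habs
      rw [abs_le]
      constructor <;>
        nlinarith [hk3.1, hk3.2, hc3.1, hc3.2, hab3.1, hab3.2,
          mul_nonneg hA (sq_nonneg (u s)), mul_nonneg hA (sq_nonneg (u' s)),
          mul_nonneg (mul_nonneg hA hA) (sq_nonneg (u s)), sq_nonneg (u s), sq_nonneg (u' s)]
    have hEzero : E t = 0 := by
      rcases le_total t₀ t with hle | hle
      · -- forward: F s = E s * exp (-L s) is antitone
        set F : ℝ → ℝ := fun s => E s * Real.exp (-L * s) with hFdef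
        have hFd : ∀ s, HasDerivAt F
            ((2 * u s * u' s + 2 * u' s * (c s * u' s - k s * u s)) * Real.exp (-L * s)
              + E s * (-L * Real.exp (-L * s))) s := by
          intro s
          have hexp : HasDerivAt (fun s : ℝ => Real.exp (-L * s)) (-L * Real.exp (-L * s)) s := by
            simpa [mul_comm] using ((hasDerivAt_id s).const_mul (-L)).exp
          exact (hEd s).mul hexp
        have hanti : Antitone F := by
          apply antitone_of_deriv_nonpos (fun s => (hFd s).differentiableAt)
          intro s
          rw [(hFd s).deriv]
          have hexp : 0 < Real.exp (-L * s) := Real.exp_pos _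
          have h1 := (abs_le.1 (hbound s)).2
          nlinarith [mul_le_mul_of_nonneg_right h1 hexp.le, mul_nonneg (hEnn s) hexp.le]
        have hF : F t ≤ F t₀ := hanti hle
        have hFt0 : F t₀ = 0 := by simp [hFdef, hEdef, h0, h0']
        have hFnn : 0 ≤ F t := mul_nonneg (hEnn t) (Real.exp_pos _).le
        have : F t = 0 := le_antisymm (hFt0 ▸ hF) hFnn
        have hexp : Real.exp (-L * t) ≠ 0 := (Real.exp_pos _).ne'
        exact (mul_eq_zero.1 this).resolve_right hexp
      · -- backward: G s = E s * exp (L s) is monotone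
        set G : ℝ → ℝ := fun s => E s * Real.exp (L * s) with hGdef
        have hGd : ∀ s, HasDerivAt G
            ((2 * u s * u' s + 2 * u' s * (c s * u' s - k s * u s)) * Real.exp (L * s)
              + E s * (L * Real.exp (L * s))) s := by
          intro s
          have hexp : HasDerivAt (fun s : ℝ => Real.exp (L * s)) (L * Real.exp (L * s)) s := by
            simpa [mul_comm] using ((hasDerivAt_id s).const_mul L).exp
          exact (hEd s).mul hexp
        have hmono : Monotone G := by
          apply monotone_of_deriv_nonneg (fun s => (hGd s).differentiableAt)
          intro s
          rw [(hGd s).deriv]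
          have hexp : 0 < Real.exp (L * s) := Real.exp_pos _
          have h1 := (abs_le.1 (hbound s)).1
          nlinarith [mul_le_mul_of_nonneg_right h1 hexp.le, mul_nonneg (hEnn s) hexp.le]
        have hG : G t ≤ G t₀ := hmono hle
        have hGt0 : G t₀ = 0 := by simp [hGdef, hEdef, h0, h0']
        have hGnn : 0 ≤ G t := mul_nonneg (hEnn t) (Real.exp_pos _).le
        have : G t = 0 := le_antisymm (hGt0 ▸ hG) hGnn
        have hexp : Real.exp (L * t) ≠ 0 := (Real.exp_pos _).ne'
        exact (mul_eq_zero.1 this).resolve_right hexp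
    have hEzero' : u t ^ 2 + u' t ^ 2 = 0 := hEzero
    have h1 : u t ^ 2 = 0 := by nlinarith [sq_nonneg (u t), sq_nonneg (u' t)]
    exact pow_eq_zero_iff (n := 2) (by norm_num) |>.1 h1
  -- Strict positivity
  have pos : ∀ a t, 0 < yl a t := by
    intro a t
    rcases (hylnn a t).lt_or_eq with h | h
    · exact h
    exfalso
    have hmin : IsLocalMin (yl a) t :=
      Filter.Eventually.of_forall fun s => by rw [← h]; exact hylnn a s
    have hd0 : yl' a t = 0 := hmin.hasDerivAt_eq_zero (hyl a t)
    have := uniq (yl a) (yl' a) (hyl a) (hylODE a) t h.symm hd0 a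
    rw [hyla a] at this
    exact one_ne_zero this
  -- Cocycle identity in the limit
  have key : ∀ a a' t, yl a t = yl a a' * yl a' t := by
    intro a a' t
    have h1 : Tendsto (fun b => Y a b t) atTop (nhds (yl a t)) := hlim a t
    have h2 : Tendsto (fun b => Y a b a' * Y a' b t) atTop
        (nhds (yl a a' * yl a' t)) := (hlim a a').mul (hlim a' t)
    refine tendsto_nhds_unique h1 (h2.congr' ?_)
    filter_upwards [eventually_gt_atTop a, eventually_gt_atTop a'] with b hab ha'b
    set C := Y a b a' with hC
    set u : ℝ → ℝ := fun s => C * Y a' b s - Y a b s with hudef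
    set u' : ℝ → ℝ := fun s => C * Y' a' b s - Y' a b s with hudef'
    have hud : ∀ s, HasDerivAt u (u' s) s := fun s =>
      ((hY a' b ha'b s).const_mul C).sub (hY a b hab s)
    have hud' : ∀ s, HasDerivAt u' (c s * u' s - k s * u s) s := by
      intro s
      have : HasDerivAt u' _ s := ((hYODE a' b ha'b s).const_mul C).sub (hYODE a b hab s)
      convert this using 1
      simp only [hudef, hudef']
      ring
    have hua' : u a' = 0 := by simp [hudef, hYa a' b ha'b, hC]
    have hub : u b = 0 := by simp [hudef, hYb a' b ha'b, hYb a b hab]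
    have := hnoconj u u' hud hud' a' b (ne_of_lt ha'b) hua' hub t
    simp only [hudef, sub_eq_zero] at this
    exact this
  refine ⟨pos, ?_, ?_⟩
  · intro a t
    have hne : yl a t ≠ 0 := (pos a t).ne'
    have : HasDerivAt (fun s => yl' a s / yl a s) _ t := (hylODE a t).fun_div (hyl a t) hne
    convert this using 1
    field_simp
    ring
  · intro a a' t
    have hfun : yl a = fun s => yl a a' * yl a' s := funext (key a a')
    have hC : (0 : ℝ) < yl a a' := pos a a'
    have hd : HasDerivAt (yl a) (yl a a' * yl' a' t) t := by
      have h := (hyl a' t).const_mul (yl a a')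
      rw [← hfun] at h
      exact h
    have hval : yl' a t = yl a a' * yl' a' t := (hyl a t).unique hd
    rw [hval, key a a' t, mul_div_mul_left _ _ hC.ne']
end
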